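/- arXiv:2604.00103 — 2 statements merged into one kernel-verified Lean document; each statement's English description precedes it below -/
import Mathlib

section
/- Let 𝔥 be a finite-dimensional complex vector space with nondegenerate symmetric bilinear form and orthonormal basis {H^1,…,H^d}, and let ĥ be the associated Heisenberg algebra acting on its Fock representation π with central element 𝟏 acting as the identity. Then the operators b_m b_n ↦ Σ_{i=1}^d H^i_m H^i_n and 𝟏 ↦ d·id define an action on π of the central extension of 𝔰𝔭 topologically generated by quadratics: concretely, for all integers m, n, p, q, the commutator [Σ_i :H^i_m H^i_n:, Σ_j :H^j_p H^j_q:] of normally ordered quadratic operators reproduces the bracket of the metaplectic algebra with central charge d. -/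
/-- The normally ordered quadratic operator `Σ_{i=1}^d :H^i_x H^i_y:` on the Fock
representation: normal ordering places the operator with larger index to the right
(i.e. it acts first). -/
noncomputable def normQuad {d : ℕ} {π : Type*} [AddCommGroup π] [Module ℂ π]
    (H : Fin d → ℤ → Module.End ℂ π) (x y : ℤ) : Module.End ℂ π :=
  ∑ i, if x ≤ y then H i x * H i y else H i y * H i x


private lemma sum_lie_sum' {R : Type*} [Ring R] {ι κ : Type*} (s : Finset ι) (t : Finset κ)
    (f : ι → R) (g : κ → R) :
    ⁅∑ i ∈ s, f i, ∑ j ∈ t, g j⁆ = ∑ i ∈ s, ∑ j ∈ t, ⁅f i, g j⁆ := by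
  rw [Ring.lie_def, Finset.sum_mul_sum, Finset.sum_mul_sum]
  rw [show (∑ j ∈ t, ∑ i ∈ s, g j * f i) = ∑ i ∈ s, ∑ j ∈ t, g j * f i from Finset.sum_comm]
  rw [← Finset.sum_sub_distrib]
  exact Finset.sum_congr rfl fun i _ => by
    rw [← Finset.sum_sub_distrib]
    exact Finset.sum_congr rfl fun j _ => (Ring.lie_def _ _).symm

private lemma lie_mul_mul' {R : Type*} [Ring R] (a b c e : R) :
    ⁅a*b, c*e⁆ = a*⁅b,c⁆*e + a*c*⁅b,e⁆ + ⁅a,c⁆*(e*b) + c*⁅a,e⁆*b := by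
  simp only [Ring.lie_def]; noncomm_ring

/-- Let `{H^1,…,H^d}` be an orthonormal basis of `𝔥` acting on the Fock representation `π`
with `[H^i_m, H^j_n] = δ_{ij} m δ_{m,-n}·id` (the central element `𝟏` acting as the
identity).  Then the assignment `b_m b_n ↦ Σ_i :H^i_m H^i_n:`, `𝟏 ↦ d·id` is compatible
with the bracket of the metaplectic algebra of central charge `d`: the commutator of the
normally ordered quadratic operators reproduces the quadratic terms together with the
central term multiplied by `d`. -/
theorem metaplectic_action_on_fock (d : ℕ) (π : Type*) [AddCommGroup π] [Module ℂ π]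
    (H : Fin d → ℤ → Module.End ℂ π)
    (hcomm : ∀ (i j : Fin d) (m n : ℤ),
      ⁅H i m, H j n⁆ = (if i = j ∧ m + n = 0 then (m : ℂ) else 0) • (1 : Module.End ℂ π)) :
    ∀ m n p q : ℤ,
      ⁅normQuad H m n, normQuad H p q⁆ =
        (if n + p = 0 then (n : ℂ) else 0) • normQuad H m q +
        (if n + q = 0 then (n : ℂ) else 0) • normQuad H m p +
        (if m + p = 0 then (m : ℂ) else 0) • normQuad H q n +
        (if m + q = 0 then (m : ℂ) else 0) • normQuad H p n +
        ((d : ℂ) * ((if n + p = 0 ∧ m + q = 0 ∧ q < m then (n : ℂ) * (m : ℂ) else 0) +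
          (if n + q = 0 ∧ m + p = 0 ∧ p < m then (n : ℂ) * (m : ℂ) else 0) +
          (if m + p = 0 ∧ q + n = 0 ∧ n < q then (m : ℂ) * (q : ℂ) else 0) +
          (if m + q = 0 ∧ p + n = 0 ∧ n < p then (m : ℂ) * (p : ℂ) else 0))) •
            (1 : Module.End ℂ π) := by
  intro m n p q
  set S : ℤ → ℤ → Module.End ℂ π := fun x y => ∑ i, H i x * H i y with hSdef
  -- relation between normQuad and S
  have hS : ∀ x y : ℤ, normQuad H x y
      = S x y - (if x + y = 0 ∧ y < x then (d : ℂ) * x else 0) • 1 := by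
    intro x y
    by_cases h : x ≤ y
    · have : ¬ (x + y = 0 ∧ y < x) := by rintro ⟨_, h2⟩; omega
      simp [normQuad, hSdef, h, this]
    · push_neg at h
      have hy : ¬ x ≤ y := not_le.2 h
      have step : ∀ i : Fin d, H i y * H i x
          = H i x * H i y - (if x + y = 0 then (x : ℂ) else 0) • 1 := by
        intro i
        have hii : ⁅H i x, H i y⁆ = (if x + y = 0 then (x : ℂ) else 0) • 1 := by
          rw [hcomm]; congr 1; simp
        rw [eq_sub_iff_add_eq, ← hii, Ring.lie_def]
        abel
      calc normQuad H x y = ∑ i, H i y * H i x := by simp [normQuad, hy]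
        _ = ∑ i : Fin d, (H i x * H i y - (if x + y = 0 then (x : ℂ) else 0) • 1) := by
              simp only [step]
        _ = S x y - (d : ℕ) • ((if x + y = 0 then (x : ℂ) else 0) • (1 : Module.End ℂ π)) := by
              rw [Finset.sum_sub_distrib, Finset.sum_const, Finset.card_univ, Fintype.card_fin]
        _ = S x y - (if x + y = 0 ∧ y < x then (d : ℂ) * x else 0) • 1 := by
              congr 1
              have hc : (if x + y = 0 ∧ y < x then (d : ℂ) * x else 0)
                  = (d : ℂ) * (if x + y = 0 then (x : ℂ) else 0) := by
                by_cases hxy : x + y = 0 <;> simp [hxy, h]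
              rw [hc, mul_smul, ← Nat.cast_smul_eq_nsmul ℂ]
  -- bracket of a quadratic pair
  have hkey : ∀ i j : Fin d, ⁅H i m * H i n, H j p * H j q⁆ =
      (if i = j ∧ n + p = 0 then (n : ℂ) else 0) • (H i m * H j q) +
      (if i = j ∧ n + q = 0 then (n : ℂ) else 0) • (H i m * H j p) +
      (if i = j ∧ m + p = 0 then (m : ℂ) else 0) • (H j q * H i n) +
      (if i = j ∧ m + q = 0 then (m : ℂ) else 0) • (H j p * H i n) := by
    intro i j
    rw [lie_mul_mul', hcomm, hcomm, hcomm, hcomm]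
    simp only [mul_smul_comm, smul_mul_assoc, mul_one, one_mul]
  -- collapsing a Kronecker-delta sum
  have collapse : ∀ (i : Fin d) (P : Prop) [Decidable P] (c : ℂ) (g : Fin d → Module.End ℂ π),
      (∑ j, (if i = j ∧ P then c else 0) • g j) = (if P then c else 0) • g i := by
    intro i P _ c g
    rw [Finset.sum_eq_single i]
    · by_cases hP : P <;> simp [hP]
    · intro j _ hji
      have : ¬ (i = j ∧ P) := fun h => hji h.1.symm
      rw [if_neg this, zero_smul]
    · simp
  -- the bracket of the unordered quadratics
  have hB : ⁅S m n, S p q⁆ =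
      (if n + p = 0 then (n : ℂ) else 0) • S m q +
      (if n + q = 0 then (n : ℂ) else 0) • S m p +
      (if m + p = 0 then (m : ℂ) else 0) • S q n +
      (if m + q = 0 then (m : ℂ) else 0) • S p n := by
    have expand : ⁅S m n, S p q⁆ = ∑ i, ∑ j, ⁅H i m * H i n, H j p * H j q⁆ := by
      simp only [hSdef]
      exact sum_lie_sum' _ _ _ _
    rw [expand]
    have inner : ∀ i : Fin d, (∑ j, ⁅H i m * H i n, H j p * H j q⁆) =
        (if n + p = 0 then (n : ℂ) else 0) • (H i m * H i q) +
        (if n + q = 0 then (n : ℂ) else 0) • (H i m * H i p) +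
        (if m + p = 0 then (m : ℂ) else 0) • (H i q * H i n) +
        (if m + q = 0 then (m : ℂ) else 0) • (H i p * H i n) := by
      intro i
      rw [Finset.sum_congr rfl fun j _ => hkey i j]
      rw [Finset.sum_add_distrib, Finset.sum_add_distrib, Finset.sum_add_distrib,
        collapse i _ _ (fun j => H i m * H j q), collapse i _ _ (fun j => H i m * H j p),
        collapse i _ _ (fun j => H j q * H i n), collapse i _ _ (fun j => H j p * H i n)]
    rw [Finset.sum_congr rfl fun i _ => inner i]
    rw [Finset.sum_add_distrib, Finset.sum_add_distrib, Finset.sum_add_distrib]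
    simp only [hSdef, ← Finset.smul_sum]
  -- the central parts contribute nothing to the bracket
  have z1 : ∀ (a : Module.End ℂ π) (c : ℂ), ⁅a, c • (1 : Module.End ℂ π)⁆ = 0 := by
    intro a c; simp [Ring.lie_def, mul_smul_comm, smul_mul_assoc]
  have z2 : ∀ (a : Module.End ℂ π) (c : ℂ), ⁅c • (1 : Module.End ℂ π), a⁆ = 0 := by
    intro a c; simp [Ring.lie_def, mul_smul_comm, smul_mul_assoc]
  have main : ⁅normQuad H m n, normQuad H p q⁆ = ⁅S m n, S p q⁆ := by
    rw [hS m n, hS p q]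
    rw [Ring.lie_def, Ring.lie_def]
    simp only [sub_mul, mul_sub, smul_mul_assoc, mul_smul_comm, one_mul, mul_one]
    module
  rw [main, hB, hS m q, hS m p, hS q n, hS p n]
  -- scalar identity for the central term
  have e1 : (d : ℂ) * (if n + p = 0 ∧ m + q = 0 ∧ q < m then (n : ℂ) * m else 0)
      = (if n + p = 0 then (n : ℂ) else 0) * (if m + q = 0 ∧ q < m then (d : ℂ) * m else 0) := by
    by_cases h1 : n + p = 0 <;> by_cases h2 : m + q = 0 ∧ q < m <;>
      simp [h1, h2] <;> ring
  have e2 : (d : ℂ) * (if n + q = 0 ∧ m + p = 0 ∧ p < m then (n : ℂ) * m else 0)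
      = (if n + q = 0 then (n : ℂ) else 0) * (if m + p = 0 ∧ p < m then (d : ℂ) * m else 0) := by
    by_cases h1 : n + q = 0 <;> by_cases h2 : m + p = 0 ∧ p < m <;>
      simp [h1, h2] <;> ring
  have e3 : (d : ℂ) * (if m + p = 0 ∧ q + n = 0 ∧ n < q then (m : ℂ) * q else 0)
      = (if m + p = 0 then (m : ℂ) else 0) * (if q + n = 0 ∧ n < q then (d : ℂ) * q else 0) := by
    by_cases h1 : m + p = 0 <;> by_cases h2 : q + n = 0 ∧ n < q <;>
      simp [h1, h2] <;> ring
  have e4 : (d : ℂ) * (if m + q = 0 ∧ p + n = 0 ∧ n < p then (m : ℂ) * p else 0)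
      = (if m + q = 0 then (m : ℂ) else 0) * (if p + n = 0 ∧ n < p then (d : ℂ) * p else 0) := by
    by_cases h1 : m + q = 0 <;> by_cases h2 : p + n = 0 ∧ n < p <;>
      simp [h1, h2] <;> ring
  rw [mul_add, mul_add, mul_add, e1, e2, e3, e4]
  simp only [smul_sub, smul_smul, add_smul]
  abel
end

section
/- Let {H^i}_{i=1}^d be an orthonormal basis of 𝔥 and define L_p := (1/2) Σ_{n∈ℤ} Σ_{i=1}^d :H^i_n H^i_{p-n}: as operators on the Fock representation π of the Heisenberg algebra ĥ. Then these operators satisfy the Virasoro relations [L_p, L_q] = (p-q) L_{p+q} + (d/12)(p³-p) δ_{p,-q}·id, i.e. the Fock representation carries a Virasoro action of central charge d. -/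
/-!
Each `L p` acts on the Heisenberg generators by `⁅L p, H j m⁆ = -m • H j (p + m)`: compare the
truncated sums defining `L p` on `v` and on `H j m v`. Hence `⁅L p, L q⁆ v` equals
`-½ Σ_{|n| ≤ M} ((q - n) H_n H_{p+q-n} + n H_{p+n} H_{q-n}) v` for a large window `M`. Restoring
normal order costs the scalar `n d` for every `n > 0` when `p + q = 0`. After the shift
`n ↦ n + p` the normally ordered parts recombine to `(q - p) • 2 L (p + q) v`, while the
correction terms do not cancel at the edges of the window: they leave `d (p - p³) / 6`.
-/

open Finset Filter Function

theorem Ring.lie_mul_right {A : Type*} [Ring A] (a b c : A) :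
    ⁅a, b * c⁆ = ⁅a, b⁆ * c + b * ⁅a, c⁆ := by
  simp only [Ring.lie_def]
  noncomm_ring

theorem Ring.lie_sum {A ι : Type*} [Ring A] (a : A) (s : Finset ι) (f : ι → A) :
    ⁅a, ∑ i ∈ s, f i⁆ = ∑ i ∈ s, ⁅a, f i⁆ := by
  simp only [Ring.lie_def, mul_sum, sum_mul, sum_sub_distrib]

theorem Ring.lie_sub_smul_one {R A : Type*} [CommRing R] [Ring A] [Algebra R A] (a b : A)
    (r : R) : ⁅a, b - r • (1 : A)⁆ = ⁅a, b⁆ := by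
  simp only [Ring.lie_def, mul_sub, sub_mul, mul_smul_comm, smul_mul_assoc, mul_one, one_mul]
  abel

theorem Module.End.lie_apply_apply {R M : Type*} [CommRing R] [AddCommGroup M] [Module R M]
    (f g : Module.End R M) (v : M) : ⁅f, g⁆ v = f (g v) - g (f v) := rfl

theorem Int.sum_Icc_sub_sub {G : Type*} [AddCommGroup G] (f : ℤ → G) {a b : ℤ}
    (h : a - 1 ≤ b) : ∑ n ∈ Icc a b, (f n - f (n - 1)) = f b - f (a - 1) := by
  induction b, h using Int.leInduction with
  | base => simp
  | succ b hb ih =>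
    rw [← insert_Icc_right_eq_Icc_add_one (by omega), sum_insert (by simp), ih,
      add_sub_cancel_right]
    abel

theorem sum_comp_add_right_of_support_subset {A : Type*} [AddCommMonoid A] (h : ℤ → A) (p : ℤ)
    {s : Finset ℤ} (hs : support h ⊆ s) (hs' : support (fun n ↦ h (n + p)) ⊆ s) :
    ∑ n ∈ s, h (n + p) = ∑ n ∈ s, h n := by
  rw [← finsum_eq_finsetSum_of_support_subset _ hs,
    ← finsum_eq_finsetSum_of_support_subset _ hs']
  exact finsum_comp_equiv (Equiv.addRight p)

theorem sum_smul_add_smul_comp_add {R E : Type*} [Ring R] [AddCommGroup E] [Module R E]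
    (Q : ℤ → E) (p q : ℤ) {s : Finset ℤ} (hs : support Q ⊆ s)
    (hs' : support (fun n ↦ Q (n + p)) ⊆ s) :
    ∑ n ∈ s, (((q - n : ℤ) : R) • Q n + (n : R) • Q (p + n)) = ((q - p : ℤ) : R) • ∑ n ∈ s, Q n := by
  have hshift : ∑ n ∈ s, (n : R) • Q (p + n) = ∑ n ∈ s, ((n - p : ℤ) : R) • Q n := by
    simpa [add_comm] using
      sum_comp_add_right_of_support_subset (fun m ↦ ((m - p : ℤ) : R) • Q m) p
        ((support_smul_subset_right _ _).trans hs) ((support_smul_subset_right _ _).trans hs')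
  rw [sum_add_distrib, hshift, ← sum_add_distrib, smul_sum]
  exact sum_congr rfl fun n _ ↦ by rw [← add_smul, ← Int.cast_add, sub_add_sub_cancel]

theorem eventually_Icc_subset_Icc_neg (a b : ℤ) : ∀ᶠ M in atTop, Icc a b ⊆ Icc (-M) M := by
  filter_upwards [eventually_ge_atTop (-a), eventually_ge_atTop b] with M ha hb
  exact Icc_subset_Icc (by omega) hb

theorem six_mul_sum_Icc_virasoro_anomaly (p M : ℤ) (hM : |p| ≤ M) :
    6 * ∑ n ∈ Icc (-M) M,
        ((-p - n) * (if 0 < n then n else 0) + n * (if 0 < p + n then p + n else 0))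
      = p - p ^ 3 := by
  obtain ⟨hpM, hMp⟩ := abs_le.mp hM
  -- `P` is a discrete antiderivative of `6 n (p + n)`.
  set P : ℤ → ℤ := fun n ↦ n * (n + 1) * (2 * n + 1) + 3 * p * n * (n + 1)
  have hP : ∀ a, a - 1 ≤ M → 6 * ∑ n ∈ Icc a M, n * (p + n) = P M - P (a - 1) := by
    intro a ha
    rw [mul_sum, ← Int.sum_Icc_sub_sub P ha]
    exact sum_congr rfl fun n _ ↦ by ring
  have h1 : {n ∈ Icc (-M) M | 0 < p + n} = Icc (1 - p) M := by
    ext n; simp only [mem_filter, mem_Icc]; omega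
  have h2 : {n ∈ Icc (-M) M | 0 < n} = Icc 1 M := by
    ext n; simp only [mem_filter, mem_Icc]; omega
  simp only [mul_ite, mul_zero, sum_add_distrib, ← sum_filter, h1, h2]
  rw [sum_congr rfl fun n _ ↦ show (-p - n) * n = -(n * (p + n)) by ring, sum_neg_distrib,
    mul_add, mul_neg, hP _ (by omega), hP _ (by omega)]
  simp only [P]
  ring

namespace Heisenberg

/-- The scalar by which `∑ j, H j x * H j (s - x)` exceeds its normal ordering. -/
def normalOrderingCorrection (d : ℕ) (s x : ℤ) : ℂ := if s = 0 ∧ 0 < x then (x : ℂ) * d else 0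

theorem sum_Icc_normalOrderingCorrection (d : ℕ) (p q M : ℤ) (hM : |p| ≤ M) :
    ∑ n ∈ Icc (-M) M, (((q - n : ℤ) : ℂ) * normalOrderingCorrection d (p + q) n
        + n * normalOrderingCorrection d (p + q) (p + n))
      = if p + q = 0 then (d : ℂ) * (p - p ^ 3) / 6 else 0 := by
  split_ifs with hs
  · obtain rfl : q = -p := by omega
    have h := congrArg (Int.cast : ℤ → ℂ) (six_mul_sum_Icc_virasoro_anomaly p M hM)
    push_cast at h
    calc _ = (d : ℂ) * ∑ n ∈ Icc (-M) M, (((-(p : ℂ) - n) * if 0 < n then (n : ℂ) else 0)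
            + n * if 0 < p + n then (p : ℂ) + n else 0) := by
          rw [mul_sum]
          refine sum_congr rfl fun n _ ↦ ?_
          simp only [normalOrderingCorrection, hs, true_and]
          split_ifs <;> push_cast <;> ring
      _ = _ := by linear_combination (d : ℂ) / 6 * h
  · simp [normalOrderingCorrection, hs]

variable {d : ℕ} {π : Type*} [AddCommGroup π] [Module ℂ π] (H : Fin d → ℤ → Module.End ℂ π)

def AnnihilatedFrom (N : ℤ) (v : π) : Prop := ∀ i n, N ≤ n → H i n v = 0

variable {H}

theorem normQuad_apply_eq_zero {N : ℤ} {v : π} (hv : AnnihilatedFrom H N v) {x y : ℤ}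
    (h : N ≤ max x y) : normQuad H x y v = 0 := by
  rw [normQuad, LinearMap.sum_apply]
  refine sum_eq_zero fun i _ ↦ ?_
  split_ifs with hxy
  · rw [Module.End.mul_apply, hv i y (by omega), map_zero]
  · rw [Module.End.mul_apply, hv i x (by omega), map_zero]

theorem support_normQuad_apply_subset {N : ℤ} {v : π} (hv : AnnihilatedFrom H N v) (s : ℤ) :
    support (fun m ↦ normQuad H m (s - m) v) ⊆ Icc (s - N + 1) (N - 1) := by
  intro m hm
  by_contra h
  exact hm (normQuad_apply_eq_zero hv (by rw [coe_Icc, Set.mem_Icc] at h; omega))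

variable {L : ℤ → Module.End ℂ π} in
theorem eventually_L_apply_eq
    (hL : ∀ (p : ℤ) (v : π) (N : ℤ), (∀ (i : Fin d) (n : ℤ), N ≤ n → H i n v = 0) →
      ∀ M : ℤ, N ≤ M → N - p ≤ M →
        L p v = (2 : ℂ)⁻¹ • ∑ n ∈ Finset.Icc (-M) M, normQuad H n (p - n) v)
    {N : ℤ} {v : π} (hv : AnnihilatedFrom H N v) (p : ℤ) :
    ∀ᶠ M in atTop, L p v = (2 : ℂ)⁻¹ • ∑ n ∈ Icc (-M) M, normQuad H n (p - n) v := by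
  filter_upwards [eventually_ge_atTop N, eventually_ge_atTop (N - p)] with M h1 h2
  exact hL p v N hv M h1 h2

variable (hcomm : ∀ (i j : Fin d) (m n : ℤ),
  ⁅H i m, H j n⁆ = (if i = j ∧ m + n = 0 then (m : ℂ) else 0) • (1 : Module.End ℂ π))
include hcomm

theorem apply_apply_swap (i j : Fin d) (a b : ℤ) (v : π) :
    H i a (H j b v) = H j b (H i a v) + (if i = j ∧ a + b = 0 then (a : ℂ) else 0) • v := by
  have h := LinearMap.congr_fun (hcomm i j a b) v
  rwa [Module.End.lie_apply_apply, LinearMap.smul_apply, Module.End.one_apply,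
    sub_eq_iff_eq_add'] at h

theorem AnnihilatedFrom.apply {N : ℤ} {v : π} (hv : AnnihilatedFrom H N v) (j : Fin d) (m : ℤ) :
    AnnihilatedFrom H (max N (1 - m)) (H j m v) := by
  intro i n hn
  rw [apply_apply_swap hcomm, hv i n (by omega), map_zero, zero_add, if_neg (by omega),
    zero_smul]

theorem sum_mul_eq_normQuad_add (x y : ℤ) :
    ∑ j, H j x * H j y
      = normQuad H x y + (if y < x ∧ x + y = 0 then (x : ℂ) * d else 0) • 1 := by
  unfold normQuad
  by_cases hxy : x ≤ y
  · simp [hxy, not_lt.2 hxy]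
  · have hswap : ∀ j, H j x * H j y = H j y * H j x + (if x + y = 0 then (x : ℂ) else 0) • 1 := by
      intro j
      rw [← sub_eq_iff_eq_add', ← Ring.lie_def, hcomm]
      simp
    simp only [hxy, if_false, lt_of_not_ge hxy, true_and, sum_congr rfl fun j _ ↦ hswap j,
      sum_add_distrib, sum_const, card_univ, Fintype.card_fin, ← Nat.cast_smul_eq_nsmul ℂ,
      smul_smul]
    split_ifs <;> simp [mul_comm]

theorem sum_mul_sub_eq_normQuad_add (x s : ℤ) :
    ∑ j, H j x * H j (s - x)
      = normQuad H x (s - x) + normalOrderingCorrection d s x • 1 := by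
  rw [sum_mul_eq_normQuad_add hcomm, normalOrderingCorrection]
  congr 3
  apply propext
  omega

theorem lie_normQuad (j : Fin d) (m x y : ℤ) :
    ⁅H j m, normQuad H x y⁆
      = (if m + x = 0 then (m : ℂ) else 0) • H j y
        + (if m + y = 0 then (m : ℂ) else 0) • H j x := by
  have hprod : ∀ i a b, ⁅H j m, H i a * H i b⁆
      = (if j = i ∧ m + a = 0 then (m : ℂ) else 0) • H i b
        + (if j = i ∧ m + b = 0 then (m : ℂ) else 0) • H i a := by
    intro i a b
    rw [Ring.lie_mul_right, hcomm, hcomm, smul_mul_assoc, mul_smul_comm, one_mul, mul_one]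
  have hterm : ∀ i, ⁅H j m, if x ≤ y then H i x * H i y else H i y * H i x⁆
      = (if j = i ∧ m + x = 0 then (m : ℂ) else 0) • H i y
        + (if j = i ∧ m + y = 0 then (m : ℂ) else 0) • H i x := by
    intro i
    by_cases hxy : x ≤ y
    · rw [if_pos hxy, hprod]
    · rw [if_neg hxy, hprod, add_comm]
  rw [normQuad, Ring.lie_sum, sum_congr rfl fun i _ ↦ hterm i]
  simp [ite_and, sum_add_distrib]

variable {L : ℤ → Module.End ℂ π}
  (hloc : ∀ v : π, ∃ N : ℤ, ∀ (i : Fin d) (n : ℤ), N ≤ n → H i n v = 0)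
  (hL : ∀ (p : ℤ) (v : π) (N : ℤ), (∀ (i : Fin d) (n : ℤ), N ≤ n → H i n v = 0) →
      ∀ M : ℤ, N ≤ M → N - p ≤ M →
        L p v = (2 : ℂ)⁻¹ • ∑ n ∈ Finset.Icc (-M) M, normQuad H n (p - n) v)
include hloc hL

theorem lie_L_H (p : ℤ) (j : Fin d) (m : ℤ) : ⁅L p, H j m⁆ = -(m : ℂ) • H j (p + m) := by
  ext v
  obtain ⟨N, hN⟩ : ∃ N, AnnihilatedFrom H N v := hloc v
  obtain ⟨M, hLv, hLHv, hmem, hmem'⟩ := ((eventually_L_apply_eq hL hN p).and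
    ((eventually_L_apply_eq hL (hN.apply hcomm j m) p).and
    ((eventually_Icc_subset_Icc_neg (-m) (-m)).and
    (eventually_Icc_subset_Icc_neg (p + m) (p + m))))).exists
  have hswap : ∀ n, normQuad H n (p - n) (H j m v) = H j m (normQuad H n (p - n) v)
      - ((if m + n = 0 then (m : ℂ) else 0) • H j (p - n) v
        + (if m + (p - n) = 0 then (m : ℂ) else 0) • H j n v) := by
    intro n
    have h := LinearMap.congr_fun (lie_normQuad hcomm j m n (p - n)) v
    rw [Module.End.lie_apply_apply, LinearMap.add_apply, LinearMap.smul_apply,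
      LinearMap.smul_apply] at h
    rw [← h, sub_sub_cancel]
  have hcollapse : ∑ n ∈ Icc (-M) M, ((if m + n = 0 then (m : ℂ) else 0) • H j (p - n) v
      + (if m + (p - n) = 0 then (m : ℂ) else 0) • H j n v) = (2 * m : ℂ) • H j (p + m) v := by
    rw [sum_add_distrib, sum_eq_single_of_mem (-m) (by simpa using hmem)
        (fun n _ hn ↦ by rw [if_neg (by omega), zero_smul]),
      sum_eq_single_of_mem (p + m) (by simpa using hmem')
        (fun n _ hn ↦ by rw [if_neg (by omega), zero_smul]),
      if_pos (by omega), if_pos (by omega), sub_neg_eq_add, ← add_smul, two_mul]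
  rw [Module.End.lie_apply_apply, hLHv, hLv, sum_congr rfl fun n _ ↦ hswap n, sum_sub_distrib,
    hcollapse, ← map_sum, map_smul]
  simp only [LinearMap.smul_apply]
  module

theorem AnnihilatedFrom.L_apply {N : ℤ} {v : π} (hv : AnnihilatedFrom H N v) (p : ℤ) :
    AnnihilatedFrom H (max N (N - p)) (L p v) := by
  intro i n hn
  have h := LinearMap.congr_fun (lie_L_H hcomm hloc hL p i n) v
  rwa [Module.End.lie_apply_apply, LinearMap.smul_apply, hv i n (by omega),
    hv i (p + n) (by omega), map_zero, smul_zero, zero_sub, neg_eq_zero] at h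

theorem lie_L_normQuad (p x y : ℤ) :
    ⁅L p, normQuad H x y⁆
      = -((y : ℂ) • ∑ j, H j x * H j (p + y) + (x : ℂ) • ∑ j, H j (p + x) * H j y) := by
  rw [eq_sub_of_add_eq (sum_mul_eq_normQuad_add hcomm x y).symm, Ring.lie_sub_smul_one,
    Ring.lie_sum]
  simp only [Ring.lie_mul_right, lie_L_H hcomm hloc hL, neg_smul, neg_mul, mul_neg,
    smul_mul_assoc, mul_smul_comm, sum_add_distrib, ← smul_sum, sum_neg_distrib]
  abel

theorem lie_L_normQuad_sub (p q n : ℤ) :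
    ⁅L p, normQuad H n (q - n)⁆
      = -(((q - n : ℤ) : ℂ) • (normQuad H n (p + q - n)
            + normalOrderingCorrection d (p + q) n • 1)
          + (n : ℂ) • (normQuad H (p + n) (p + q - (p + n))
            + normalOrderingCorrection d (p + q) (p + n) • 1)) := by
  rw [lie_L_normQuad hcomm hloc hL, ← add_sub_assoc, ← sum_mul_sub_eq_normQuad_add hcomm n,
    ← sum_mul_sub_eq_normQuad_add hcomm (p + n), add_sub_add_left_eq_sub]

theorem lie_L_L_apply (p q : ℤ) (v : π) :
    ⁅L p, L q⁆ v = ((p : ℂ) - q) • L (p + q) v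
      + (if p + q = 0 then (d : ℂ) / 12 * ((p : ℂ) ^ 3 - p) else 0) • v := by
  obtain ⟨N, hN⟩ : ∃ N, AnnihilatedFrom H N v := hloc v
  set Q : ℤ → π := fun m ↦ normQuad H m (p + q - m) v
  set c : ℤ → ℂ := normalOrderingCorrection d (p + q)
  have hQ := support_normQuad_apply_subset hN (p + q)
  obtain ⟨M, hLq, hLqp, hLs, hsub, hsub', hM⟩ := ((eventually_L_apply_eq hL hN q).and
    ((eventually_L_apply_eq hL (hN.L_apply hcomm hloc hL p) q).and
    ((eventually_L_apply_eq hL hN (p + q)).and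
    ((eventually_Icc_subset_Icc_neg (p + q - N + 1) (N - 1)).and
    ((eventually_Icc_subset_Icc_neg (q - N + 1) (N - 1 - p)).and
    (eventually_ge_atTop |p|)))))).exists
  have hQshift : support (fun n ↦ Q (n + p)) ⊆ Icc (-M) M := by
    intro n hn
    have h := hQ hn
    simp only [coe_Icc, Set.mem_Icc] at h
    exact coe_subset.2 hsub' (by simp only [coe_Icc, Set.mem_Icc]; omega)
  have hLs' : ∑ n ∈ Icc (-M) M, Q n = (2 : ℂ) • L (p + q) v := by
    rw [hLs, smul_smul, mul_inv_cancel₀ two_ne_zero, one_smul]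
  calc ⁅L p, L q⁆ v = (2 : ℂ)⁻¹ • ∑ n ∈ Icc (-M) M, ⁅L p, normQuad H n (q - n)⁆ v := by
        rw [Module.End.lie_apply_apply, hLq, hLqp, map_smul, map_sum, ← smul_sub,
          ← sum_sub_distrib]
        rfl
    _ = -(2 : ℂ)⁻¹ • ∑ n ∈ Icc (-M) M, ((((q - n : ℤ) : ℂ) • Q n + (n : ℂ) • Q (p + n))
          + (((q - n : ℤ) : ℂ) * c n + n * c (p + n)) • v) := by
        rw [neg_smul, ← smul_neg, ← sum_neg_distrib]
        refine congrArg _ (sum_congr rfl fun n _ ↦ ?_)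
        rw [lie_L_normQuad_sub hcomm hloc hL]
        simp only [LinearMap.neg_apply, LinearMap.add_apply, LinearMap.smul_apply,
          Module.End.one_apply, Q, c]
        module
    _ = -(2 : ℂ)⁻¹ • (((q - p : ℤ) : ℂ) • (2 : ℂ) • L (p + q) v
          + (if p + q = 0 then (d : ℂ) * (p - p ^ 3) / 6 else 0) • v) := by
        rw [sum_add_distrib, sum_smul_add_smul_comp_add Q p q (hQ.trans (coe_subset.2 hsub))
          hQshift, hLs', ← sum_smul, sum_Icc_normalOrderingCorrection d p q M hM]
    _ = _ := by
        split_ifs <;> push_cast <;> module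

end Heisenberg

/-- Let `{H^i}_{i=1}^d` be an orthonormal basis of `𝔥` acting on the Fock representation
`π` of the Heisenberg algebra (so `[H^i_n, H^j_m] = δ_{ij} n δ_{n,-m}·id` and each vector
is annihilated by all `H^i_n` for `n` large), and let
`L_p = (1/2) Σ_{n∈ℤ} Σ_{i=1}^d :H^i_n H^i_{p-n}:` (the locally finite normally ordered
sum, characterized by its finite truncations).  Then the operators `L_p` satisfy the
Virasoro relations `[L_p, L_q] = (p-q) L_{p+q} + (d/12)(p³-p) δ_{p,-q}·id`, i.e. the Fock
representation carries a Virasoro action of central charge `d`. -/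
theorem virasoro_action_on_fock (d : ℕ) (π : Type*) [AddCommGroup π] [Module ℂ π]
    (H : Fin d → ℤ → Module.End ℂ π)
    (hcomm : ∀ (i j : Fin d) (m n : ℤ),
      ⁅H i m, H j n⁆ = (if i = j ∧ m + n = 0 then (m : ℂ) else 0) • (1 : Module.End ℂ π))
    (hloc : ∀ v : π, ∃ N : ℤ, ∀ (i : Fin d) (n : ℤ), N ≤ n → H i n v = 0)
    (L : ℤ → Module.End ℂ π)
    (hL : ∀ (p : ℤ) (v : π) (N : ℤ), (∀ (i : Fin d) (n : ℤ), N ≤ n → H i n v = 0) →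
      ∀ M : ℤ, N ≤ M → N - p ≤ M →
        L p v = (2 : ℂ)⁻¹ • ∑ n ∈ Finset.Icc (-M) M, normQuad H n (p - n) v) :
    ∀ p q : ℤ,
      ⁅L p, L q⁆ = ((p : ℂ) - (q : ℂ)) • L (p + q) +
        (if p + q = 0 then ((d : ℂ) / 12) * ((p : ℂ) ^ 3 - (p : ℂ)) else 0) •
          (1 : Module.End ℂ π) := by
  intro p q
  ext v
  rw [Heisenberg.lie_L_L_apply hcomm hloc hL]
  rfl
end
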